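/- arXiv:1003.4355 — 8 statements merged into one kernel-verified Lean document; each statement's English description precedes it below -/
import Mathlib

section
/- Let λ1, λ2 > 0 and 0 ≤ ρ < 1. The joint density f integrates to one: ∫_0^∞ ∫_0^∞ f(α,β) dα dβ = 1, where f(α,β) = Σ_{k=0}^∞ c_k (1/(λ1 λ2)) exp(-(α/λ1 + β/λ2)/(1-ρ)) (α/λ1)^k (β/λ2)^k and c_k = ρ^k / ((k!)^2 (1-ρ)^{2k+1}). -/
open MeasureTheory Real Set

/-!
Splitting the exponential, the `k`-th term of the series is `c_k / (λ₁ λ₂)` times the product of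
the Gamma kernels `(α/λ₁)^k e^{-α/(λ₁(1-ρ))}` and `(β/λ₂)^k e^{-β/(λ₂(1-ρ))}`, whose integrals are
`k! λᵢ (1-ρ)^{k+1}`. All terms are nonnegative, so both integrals can be taken term by term:
integrating out `α` leaves an exponential series in `β`, and integrating out `β` leaves the
geometric series `∑ (1-ρ) ρ^k = 1`.
-/

lemma integral_tsum_mul_of_nonneg {X ι : Type*} [MeasurableSpace X] [Countable ι]
    {μ : Measure X} {a : ι → ℝ} {f : ι → X → ℝ} (ha : ∀ i, 0 ≤ a i)
    (hf : ∀ i, Integrable (f i) μ) (hf₀ : ∀ i, 0 ≤ᵐ[μ] f i)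
    (hs : Summable fun i => a i * ∫ x, f i x ∂μ) :
    ∫ x, ∑' i, a i * f i x ∂μ = ∑' i, a i * ∫ x, f i x ∂μ := by
  have hnorm : ∀ i, ∫ x, ‖a i * f i x‖ ∂μ = a i * ∫ x, f i x ∂μ := fun i => by
    rw [← integral_const_mul]
    exact integral_congr_ae <| (hf₀ i).mono fun x hx => norm_of_nonneg (mul_nonneg (ha i) hx)
  rw [← integral_tsum_of_summable_integral_norm (fun i => (hf i).const_mul (a i))
    (by simpa only [hnorm] using hs)]
  simp_rw [integral_const_mul]

lemma integral_pow_mul_exp_neg_mul_Ioi (k : ℕ) {r : ℝ} (hr : 0 < r) :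
    ∫ t in Ioi (0 : ℝ), t ^ k * exp (-(r * t)) = k.factorial / r ^ (k + 1) := by
  have h := integral_rpow_mul_exp_neg_mul_Ioi (a := k + 1) (by positivity) hr
  rw [add_sub_cancel_right, Gamma_nat_eq_factorial, ← Nat.cast_succ, rpow_natCast] at h
  rw [setIntegral_congr_fun measurableSet_Ioi fun t _ => by rw [← rpow_natCast t k], h, one_div,
    inv_pow, Nat.succ_eq_add_one, inv_mul_eq_div]

noncomputable def gammaKernel (L u : ℝ) (k : ℕ) (t : ℝ) : ℝ := (t / L) ^ k * exp (-(t / L) / u)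

section gammaKernel

variable {L u : ℝ} (k : ℕ)

lemma gammaKernel_nonneg (hL : 0 ≤ L) {t : ℝ} (ht : 0 ≤ t) : 0 ≤ gammaKernel L u k t := by
  unfold gammaKernel; positivity

lemma ae_nonneg_gammaKernel (hL : 0 ≤ L) :
    0 ≤ᵐ[volume.restrict (Ioi 0)] gammaKernel L u k :=
  ae_restrict_of_forall_mem measurableSet_Ioi fun _ ht => gammaKernel_nonneg k hL (le_of_lt ht)

lemma integral_gammaKernel (hL : 0 < L) (hu : 0 < u) :
    ∫ t in Ioi (0 : ℝ), gammaKernel L u k t = k.factorial * L * u ^ (k + 1) := by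
  have hrescale : gammaKernel L u k = fun t => L⁻¹ ^ k * (t ^ k * exp (-((L * u)⁻¹ * t))) := by
    ext t
    rw [gammaKernel, show -(t / L) / u = -((L * u)⁻¹ * t) by ring]
    ring
  rw [hrescale, integral_const_mul, integral_pow_mul_exp_neg_mul_Ioi k (by positivity)]
  rw [inv_pow, inv_pow, div_inv_eq_mul, mul_pow, pow_succ]
  field_simp

lemma integrableOn_gammaKernel (hL : 0 < L) (hu : 0 < u) :
    IntegrableOn (gammaKernel L u k) (Ioi 0) :=
  -- a non-integrable function would have Bochner integral `0`
  Integrable.of_integral_ne_zero <| by rw [integral_gammaKernel k hL hu]; positivity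

end gammaKernel

section jointDensity

variable {L1 L2 u ρ : ℝ}

lemma mul_gammaKernel_mul_gammaKernel (c α β : ℝ) (k : ℕ) :
    c * gammaKernel L2 u k β * gammaKernel L1 u k α =
      c * exp (-(α / L1 + β / L2) / u) * (α / L1) ^ k * (β / L2) ^ k := by
  simp only [gammaKernel, neg_add, add_div, exp_add]
  ring

lemma coeff_mul_integral_gammaKernel (hL1 : 0 < L1) (hu : 0 < u) (k : ℕ) :
    ρ ^ k / ((k.factorial : ℝ) ^ 2 * u ^ (2 * k + 1)) * (1 / (L1 * L2)) *
      ∫ α in Ioi (0 : ℝ), gammaKernel L1 u k α = (ρ / u) ^ k / k.factorial / L2 := by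
  rw [integral_gammaKernel k hL1 hu, div_pow]
  field_simp
  ring

lemma integral_tsum_coeff_mul_gammaKernel (hL1 : 0 < L1) (hL2 : 0 < L2) (hu : 0 < u)
    (hρ : 0 ≤ ρ) {β : ℝ} (hβ : 0 < β) :
    ∫ α in Ioi (0 : ℝ), ∑' k : ℕ, ρ ^ k / ((k.factorial : ℝ) ^ 2 * u ^ (2 * k + 1)) *
      (1 / (L1 * L2)) * gammaKernel L2 u k β * gammaKernel L1 u k α =
      ∑' k : ℕ, (ρ / u) ^ k / k.factorial / L2 * gammaKernel L2 u k β := by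
  have hterm : ∀ k : ℕ, ρ ^ k / ((k.factorial : ℝ) ^ 2 * u ^ (2 * k + 1)) * (1 / (L1 * L2)) *
      gammaKernel L2 u k β * ∫ α in Ioi (0 : ℝ), gammaKernel L1 u k α =
      (ρ / u) ^ k / k.factorial / L2 * gammaKernel L2 u k β := fun k => by
    rw [mul_right_comm, coeff_mul_integral_gammaKernel hL1 hu]
  have hsum : Summable fun k : ℕ => (ρ / u) ^ k / k.factorial / L2 * gammaKernel L2 u k β := by
    have hexp : ∀ k : ℕ, (ρ / u) ^ k / k.factorial / L2 * gammaKernel L2 u k β =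
        (ρ / u * (β / L2)) ^ k / k.factorial * (exp (-(β / L2) / u) / L2) := fun k => by
      rw [gammaKernel]
      ring
    simpa only [hexp] using (summable_pow_div_factorial _).mul_right _
  rw [integral_tsum_mul_of_nonneg
    (fun k => mul_nonneg (by positivity) (gammaKernel_nonneg k hL2.le hβ.le))
    (fun k => integrableOn_gammaKernel k hL1 hu) (fun k => ae_nonneg_gammaKernel k hL1.le)
    (by simpa only [hterm] using hsum)]
  exact tsum_congr hterm

lemma hasSum_coeff_mul_integral_gammaKernel (hL2 : 0 < L2) (hρ0 : 0 ≤ ρ) (hρ1 : ρ < 1) :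
    HasSum (fun k : ℕ => (ρ / (1 - ρ)) ^ k / k.factorial / L2 *
      ∫ β in Ioi (0 : ℝ), gammaKernel L2 (1 - ρ) k β) 1 := by
  have hu : 0 < 1 - ρ := sub_pos.mpr hρ1
  have hterm : ∀ k : ℕ, (ρ / (1 - ρ)) ^ k / k.factorial / L2 *
      ∫ β in Ioi (0 : ℝ), gammaKernel L2 (1 - ρ) k β = (1 - ρ) * ρ ^ k := fun k => by
    rw [integral_gammaKernel k hL2 hu, div_pow]
    field_simp
    ring
  simpa only [hterm, mul_inv_cancel₀ hu.ne'] using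
    (hasSum_geometric_of_lt_one hρ0 hρ1).mul_left (1 - ρ)

end jointDensity

/-- The joint density of the correlated exponential SNR pair
integrates to one over (0,∞) × (0,∞). -/
theorem joint_density_integrates_to_one
    (lam1 lam2 ρ : ℝ) (hlam1 : 0 < lam1) (hlam2 : 0 < lam2)
    (hρ0 : 0 ≤ ρ) (hρ1 : ρ < 1) :
    ∫ β in Ioi (0:ℝ), ∫ α in Ioi (0:ℝ),
      (∑' k : ℕ, (ρ ^ k / ((k.factorial : ℝ) ^ 2 * (1 - ρ) ^ (2 * k + 1))) *
        (1 / (lam1 * lam2)) * Real.exp (-(α / lam1 + β / lam2) / (1 - ρ)) *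
        (α / lam1) ^ k * (β / lam2) ^ k) = 1 := by
  have hu : 0 < 1 - ρ := sub_pos.mpr hρ1
  have hmoments := hasSum_coeff_mul_integral_gammaKernel hlam2 hρ0 hρ1
  simp_rw [← mul_gammaKernel_mul_gammaKernel]
  rw [setIntegral_congr_fun measurableSet_Ioi fun β hβ =>
      integral_tsum_coeff_mul_gammaKernel hlam1 hlam2 hu hρ0 hβ,
    integral_tsum_mul_of_nonneg (fun k => by positivity)
      (fun k => integrableOn_gammaKernel k hlam2 hu) (fun k => ae_nonneg_gammaKernel k hlam2.le)
      hmoments.summable, hmoments.tsum_eq]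
end

section
/- Let λ, μ > 0 and let k be a natural number. Then F_k := ∫_0^∞ x^k e^{-μx} / (1 + λx) dx = (1/λ) [ (-1/λ)^k exp(μ/λ) E_1(μ/λ) + Σ_{m=1}^{k} (m-1)! (-λ)^{m-k} / μ^m ]. -/
/-! The substitution `t = 1 + λx` turns `F₀` into `λ⁻¹ e^{μ/λ} E₁(μ/λ)`. Writing
`x / (1 + λx) = λ⁻¹ (1 - 1 / (1 + λx))` gives the recurrence
`F_{k+1} = λ⁻¹ (k! / μ^{k+1} - F_k)`, which the closed form satisfies. -/

open MeasureTheory Real Set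

noncomputable def E1 (x : ℝ) : ℝ := ∫ t in Ioi (1:ℝ), Real.exp (-x * t) / t

noncomputable def Fk (lam μ : ℝ) (k : ℕ) : ℝ :=
  ∫ x in Ioi (0:ℝ), x ^ k * Real.exp (-μ * x) / (1 + lam * x)

lemma integral_comp_add_mul_Ioi {E : Type*} [NormedAddCommGroup E] [NormedSpace ℝ E]
    (g : ℝ → E) (c : ℝ) {b : ℝ} (hb : 0 < b) :
    ∫ x in Ioi (0:ℝ), g (c + b * x) = b⁻¹ • ∫ t in Ioi c, g t := by
  have hshift : ∫ x in Ioi (0:ℝ), g (x + c) = ∫ t in Ioi c, g t := by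
    have := (measurePreserving_add_right volume c).setIntegral_preimage_emb
      (measurableEmbedding_addRight c) g (Ioi c)
    simpa [preimage_add_const_Ioi] using this
  have hscale := integral_comp_mul_left_Ioi (fun x => g (x + c)) 0 hb
  rw [mul_zero] at hscale
  rw [← hshift, ← hscale]
  simp only [add_comm c]

lemma integrableOn_pow_mul_exp_neg_mul {μ : ℝ} (hμ : 0 < μ) (k : ℕ) :
    IntegrableOn (fun x : ℝ => x ^ k * Real.exp (-μ * x)) (Ioi 0) := by
  refine (integrableOn_rpow_mul_exp_neg_mul_rpow (s := k) (p := 1)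
    (by linarith [k.cast_nonneg (α := ℝ)]) one_pos hμ).congr_fun (fun x _ => ?_) measurableSet_Ioi
  simp only [Real.rpow_one, Real.rpow_natCast]

lemma integral_pow_mul_exp_neg_mul {μ : ℝ} (hμ : 0 < μ) (k : ℕ) :
    ∫ x in Ioi (0:ℝ), x ^ k * Real.exp (-μ * x) = k.factorial / μ ^ (k + 1) := by
  have h := Real.integral_rpow_mul_exp_neg_mul_Ioi (a := (k:ℝ) + 1) (by positivity) hμ
  simp only [add_sub_cancel_right, Real.rpow_natCast, ← neg_mul] at h
  rw [h, Real.Gamma_nat_eq_factorial, ← Nat.cast_succ, Real.rpow_natCast, one_div, inv_pow, inv_mul_eq_div]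

lemma integrableOn_Fk_integrand {lam μ : ℝ} (hlam : 0 < lam) (hμ : 0 < μ) (k : ℕ) :
    IntegrableOn (fun x : ℝ => x ^ k * Real.exp (-μ * x) / (1 + lam * x)) (Ioi 0) := by
  refine (integrableOn_pow_mul_exp_neg_mul hμ k).mono'
    (by fun_prop : Measurable _).aestronglyMeasurable ?_
  filter_upwards [ae_restrict_mem measurableSet_Ioi] with x (hx : 0 < x)
  have hnum : 0 ≤ x ^ k * Real.exp (-μ * x) := by positivity
  rw [Real.norm_eq_abs, abs_of_nonneg (by positivity)]
  exact div_le_self hnum (by nlinarith)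

lemma Fk_zero {lam μ : ℝ} (hlam : 0 < lam) :
    Fk lam μ 0 = (1 / lam) * Real.exp (μ / lam) * E1 (μ / lam) := by
  have hpt : ∀ x : ℝ, Real.exp (-μ * x) / (1 + lam * x) =
      Real.exp (μ / lam) * (Real.exp (-(μ / lam) * (1 + lam * x)) / (1 + lam * x)) := by
    intro x
    rw [← mul_div_assoc, ← Real.exp_add]
    congr 2
    field_simp
    ring
  simp only [Fk, pow_zero, one_mul, hpt, integral_const_mul,
    integral_comp_add_mul_Ioi (fun t => Real.exp (-(μ / lam) * t) / t) 1 hlam, smul_eq_mul]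
  rw [E1]
  ring

lemma Fk_succ {lam μ : ℝ} (hlam : 0 < lam) (hμ : 0 < μ) (k : ℕ) :
    Fk lam μ (k + 1) = (1 / lam) * (k.factorial / μ ^ (k + 1) - Fk lam μ k) := by
  have hpt : ∀ x ∈ Ioi (0:ℝ), x ^ (k + 1) * Real.exp (-μ * x) / (1 + lam * x) =
      (1 / lam) * (x ^ k * Real.exp (-μ * x) - x ^ k * Real.exp (-μ * x) / (1 + lam * x)) := by
    intro x (hx : 0 < x)
    have : 1 + lam * x ≠ 0 := by positivity
    field_simp
    ring
  rw [Fk, setIntegral_congr_fun measurableSet_Ioi hpt, integral_const_mul,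
    integral_sub (integrableOn_pow_mul_exp_neg_mul hμ k) (integrableOn_Fk_integrand hlam hμ k),
    integral_pow_mul_exp_neg_mul hμ k, Fk]

lemma sum_Icc_succ_factorial_zpow {lam μ : ℝ} (hlam : lam ≠ 0) (k : ℕ) :
    ∑ m ∈ Finset.Icc 1 (k + 1), ((m - 1).factorial : ℝ) * (-lam) ^ ((m : ℤ) - (k + 1 : ℕ)) / μ ^ m =
      (-lam)⁻¹ * ∑ m ∈ Finset.Icc 1 k, ((m - 1).factorial : ℝ) * (-lam) ^ ((m : ℤ) - k) / μ ^ m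
        + k.factorial / μ ^ (k + 1) := by
  rw [Finset.sum_Icc_succ_top (by omega), Finset.mul_sum, Nat.add_sub_cancel, sub_self, zpow_zero,
    mul_one]
  congr 1
  refine Finset.sum_congr rfl fun m _ => ?_
  rw [Nat.cast_succ, ← sub_sub, zpow_sub_one₀ (neg_ne_zero.mpr hlam)]
  ring

/-- the closed form of F_k = ∫_0^∞ x^k e^{-μx}/(1+λx) dx
([16, 3.353.5]). -/
theorem Fk_closed_form (lam μ : ℝ) (k : ℕ) (hlam : 0 < lam) (hμ : 0 < μ) :
    ∫ x in Ioi (0:ℝ), x ^ k * Real.exp (-μ * x) / (1 + lam * x) =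
      (1 / lam) * ((-1 / lam) ^ k * Real.exp (μ / lam) * E1 (μ / lam) +
        ∑ m ∈ Finset.Icc 1 k,
          ((m - 1).factorial : ℝ) * (-lam) ^ ((m : ℤ) - (k : ℤ)) / μ ^ m) := by
  change Fk lam μ k = _
  induction k with
  | zero => simp [Fk_zero hlam, mul_assoc]
  | succ k ih =>
    rw [Fk_succ hlam hμ, ih, sum_Icc_succ_factorial_zpow hlam.ne', pow_succ]
    ring
end

section
/- Let λ1, λ2 > 0, 0 ≤ ρ < 1, and let k be a natural number. Then the double integral R_k^2 := ∫_0^∞ ln(1+λ2 v) e^{-v/(1-ρ)} v^k ( ∫_{λ2 v / λ1}^∞ e^{-u/(1-ρ)} u^k du ) dv equals k! Σ_{m=0}^{k} ((λ2/λ1)^m / m!) (1-ρ)^{k+1-m} F(λ2, k+m, (1 + λ2/λ1)/(1-ρ)). -/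
/-!
Integrating by parts `k` times evaluates the inner integral in closed form:
`∫_a^∞ e^{-u/s} u^k du = e^{-a/s} ∑_{m ≤ k} k!/m! a^m s^{k+1-m}` for `a ≥ 0`, `s > 0`.
For `a = (λ₂/λ₁) v` and `s = 1 - ρ` the two exponentials merge into `e^{-μ v}` with
`μ = (1 + λ₂/λ₁)/(1 - ρ)`, so the outer integrand is a finite combination of the integrands of
`F(λ₂, k + m, μ)`, each of which is integrable because `0 ≤ ln(1 + λx) ≤ λx`.
-/

open MeasureTheory Real Set

/-- F(λ,k,μ) = ∫_0^∞ ln(1+λx) e^{-μx} x^k dx. -/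
noncomputable def F (lam : ℝ) (k : ℕ) (μ : ℝ) : ℝ :=
  ∫ x in Ioi (0:ℝ), Real.log (1 + lam * x) * Real.exp (-μ * x) * x ^ k

open Filter Topology
open scoped Nat

noncomputable def upperGammaPoly (s : ℝ) (k : ℕ) (u : ℝ) : ℝ :=
  ∑ m ∈ Finset.range (k + 1), (k ! : ℝ) / m ! * u ^ m * s ^ (k + 1 - m)

@[simp]
lemma upperGammaPoly_zero (s u : ℝ) : upperGammaPoly s 0 u = s := by
  simp [upperGammaPoly]

lemma upperGammaPoly_succ (s : ℝ) (k : ℕ) (u : ℝ) :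
    upperGammaPoly s (k + 1) u = s * u ^ (k + 1) + (k + 1) * s * upperGammaPoly s k u := by
  rw [upperGammaPoly, Finset.sum_range_succ, add_comm, upperGammaPoly, Finset.mul_sum]
  congr 1
  · simp [mul_comm, (k + 1).factorial_ne_zero]
  · refine Finset.sum_congr rfl fun m hm => ?_
    have hmk : m ≤ k := Nat.lt_succ_iff.mp (Finset.mem_range.mp hm)
    rw [show k + 1 + 1 - m = k + 1 - m + 1 by omega, pow_succ, Nat.factorial_succ]
    push_cast
    ring

section upperGammaPoly

variable {s : ℝ} {k : ℕ}

lemma hasDerivAt_upperGammaPoly (hs : s ≠ 0) (u : ℝ) :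
    HasDerivAt (upperGammaPoly s k) (upperGammaPoly s k u / s - u ^ k) u := by
  induction k with
  | zero =>
    simpa [hs, funext (upperGammaPoly_zero s)] using hasDerivAt_const u s
  | succ k ih =>
    rw [funext (upperGammaPoly_succ s k)]
    refine (((hasDerivAt_pow (k + 1) u).const_mul s).add
      (ih.const_mul ((k + 1) * s))).congr_deriv ?_
    simp only [Nat.cast_add, Nat.cast_one, Nat.add_sub_cancel]
    field_simp
    ring

lemma hasDerivAt_exp_mul_upperGammaPoly (hs : s ≠ 0) (u : ℝ) :
    HasDerivAt (fun u => exp (-u / s) * upperGammaPoly s k u) (-(exp (-u / s) * u ^ k)) u := by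
  have hexp : HasDerivAt (fun u => exp (-u / s)) (exp (-u / s) * (-1 / s)) u := by
    simpa using ((hasDerivAt_id u).neg.div_const s).exp
  refine (hexp.mul (hasDerivAt_upperGammaPoly hs u)).congr_deriv ?_
  field_simp
  ring

lemma tendsto_exp_mul_upperGammaPoly_atTop (hs : 0 < s) :
    Tendsto (fun u => exp (-u / s) * upperGammaPoly s k u) atTop (𝓝 0) := by
  have hterm (m : ℕ) : Tendsto (fun u => exp (-u / s) * u ^ m) atTop (𝓝 0) := by
    refine (tendsto_rpow_mul_exp_neg_mul_atTop_nhds_zero m s⁻¹ (inv_pos.2 hs)).congr fun u => ?_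
    rw [rpow_natCast, mul_comm, neg_mul, ← div_eq_inv_mul, neg_div]
  have hsum := tendsto_finsetSum (Finset.range (k + 1)) fun m _ =>
    ((hterm m).const_mul ((k ! : ℝ) / m !)).mul_const (s ^ (k + 1 - m))
  simp only [mul_zero, zero_mul, Finset.sum_const_zero] at hsum
  refine hsum.congr fun u => ?_
  rw [upperGammaPoly, Finset.mul_sum]
  exact Finset.sum_congr rfl fun m _ => by ring

theorem integral_Ioi_exp_neg_div_mul_pow (hs : 0 < s) {a : ℝ} (ha : 0 ≤ a) :
    ∫ u in Ioi a, exp (-u / s) * u ^ k = exp (-a / s) * upperGammaPoly s k a := by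
  have h := integral_Ioi_of_hasDerivAt_of_nonpos'
    (fun u _ => hasDerivAt_exp_mul_upperGammaPoly (k := k) hs.ne' u)
    (fun u hu => neg_nonpos.2 (by have : 0 < u := ha.trans_lt hu; positivity))
    (tendsto_exp_mul_upperGammaPoly_atTop hs)
  rw [integral_neg] at h
  linarith

end upperGammaPoly

lemma integrableOn_Ioi_pow_mul_exp_neg_mul {c : ℝ} (hc : 0 < c) (n : ℕ) :
    IntegrableOn (fun x : ℝ => x ^ n * exp (-c * x)) (Ioi 0) := by
  simpa using integrableOn_rpow_mul_exp_neg_mul_rpow (p := 1) (s := n)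
    (neg_one_lt_zero.trans_le n.cast_nonneg) one_pos hc

lemma integrableOn_Ioi_log_one_add_mul_mul_exp_mul_pow {lam c : ℝ} (hlam : 0 ≤ lam)
    (hc : 0 < c) (n : ℕ) :
    IntegrableOn (fun x => log (1 + lam * x) * exp (-c * x) * x ^ n) (Ioi 0) := by
  refine ((integrableOn_Ioi_pow_mul_exp_neg_mul hc (n + 1)).const_mul lam).mono'
    (by fun_prop) ((ae_restrict_iff' measurableSet_Ioi).2 (Eventually.of_forall fun x hx => ?_))
  have hx : (0 : ℝ) < x := hx
  have hlog_nonneg : 0 ≤ log (1 + lam * x) := log_nonneg (by nlinarith)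
  have hlog_le : log (1 + lam * x) ≤ lam * x := by
    linarith [log_le_sub_one_of_pos (x := 1 + lam * x) (by nlinarith)]
  rw [norm_of_nonneg (by positivity)]
  calc log (1 + lam * x) * exp (-c * x) * x ^ n ≤ lam * x * exp (-c * x) * x ^ n := by gcongr
    _ = lam * (x ^ (n + 1) * exp (-c * x)) := by ring

lemma exp_mul_pow_mul_integral_Ioi_eq_sum {s r v : ℝ} (hs : 0 < s) (hr : 0 ≤ r) (hv : 0 ≤ v)
    (k : ℕ) :
    exp (-v / s) * v ^ k * ∫ u in Ioi (r * v), exp (-u / s) * u ^ k =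
      ∑ m ∈ Finset.range (k + 1),
        (k ! : ℝ) / m ! * r ^ m * s ^ (k + 1 - m) * (exp (-((1 + r) / s) * v) * v ^ (k + m)) := by
  have hexp : exp (-v / s) * exp (-(r * v) / s) = exp (-((1 + r) / s) * v) := by
    rw [← exp_add]
    ring_nf
  rw [integral_Ioi_exp_neg_div_mul_pow hs (mul_nonneg hr hv), upperGammaPoly]
  simp only [Finset.mul_sum]
  refine Finset.sum_congr rfl fun m _ => ?_
  rw [mul_pow, pow_add, ← hexp]
  ring

theorem Rk2_eval_general (lam1 lam2 ρ : ℝ) (k : ℕ) (hlam1 : 0 < lam1) (hlam2 : 0 < lam2)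
    (hρ1 : ρ < 1) :
    (∫ v in Ioi (0:ℝ), Real.log (1 + lam2 * v) * Real.exp (-v / (1 - ρ)) * v ^ k *
        ∫ u in Ioi (lam2 * v / lam1), Real.exp (-u / (1 - ρ)) * u ^ k) =
      (k.factorial : ℝ) * ∑ m ∈ Finset.range (k + 1),
        ((lam2 / lam1) ^ m / (m.factorial : ℝ)) * (1 - ρ) ^ (k + 1 - m) *
          F lam2 (k + m) ((1 + lam2 / lam1) / (1 - ρ)) := by
  have hs : 0 < 1 - ρ := sub_pos.2 hρ1
  have hr : 0 ≤ lam2 / lam1 := by positivity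
  set μ := (1 + lam2 / lam1) / (1 - ρ)
  have hμ : 0 < μ := by positivity
  calc _ = ∫ v in Ioi (0 : ℝ), ∑ m ∈ Finset.range (k + 1),
          (k ! : ℝ) / m ! * (lam2 / lam1) ^ m * (1 - ρ) ^ (k + 1 - m) *
            (log (1 + lam2 * v) * exp (-μ * v) * v ^ (k + m)) := by
        refine setIntegral_congr_fun measurableSet_Ioi fun v hv => ?_
        simp only [mul_div_right_comm lam2 v lam1, mul_assoc (log _)]
        rw [exp_mul_pow_mul_integral_Ioi_eq_sum hs hr (le_of_lt hv), Finset.mul_sum]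
        exact Finset.sum_congr rfl fun m _ => by ring
    _ = ∑ m ∈ Finset.range (k + 1),
          (k ! : ℝ) / m ! * (lam2 / lam1) ^ m * (1 - ρ) ^ (k + 1 - m) * F lam2 (k + m) μ := by
        rw [integral_finsetSum _ fun m _ =>
          (integrableOn_Ioi_log_one_add_mul_mul_exp_mul_pow hlam2.le hμ _).const_mul _]
        simp only [integral_const_mul, F]
    _ = _ := by
        rw [Finset.mul_sum]
        exact Finset.sum_congr rfl fun m _ => by ring

/-- evaluation of the double integral R_k^2. -/
theorem Rk2_eval (lam1 lam2 ρ : ℝ) (k : ℕ) (hlam1 : 0 < lam1) (hlam2 : 0 < lam2)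
    (hρ0 : 0 ≤ ρ) (hρ1 : ρ < 1) :
    (∫ v in Ioi (0:ℝ), Real.log (1 + lam2 * v) * Real.exp (-v / (1 - ρ)) * v ^ k *
        ∫ u in Ioi (lam2 * v / lam1), Real.exp (-u / (1 - ρ)) * u ^ k) =
      (k.factorial : ℝ) * ∑ m ∈ Finset.range (k + 1),
        ((lam2 / lam1) ^ m / (m.factorial : ℝ)) * (1 - ρ) ^ (k + 1 - m) *
          F lam2 (k + m) ((1 + lam2 / lam1) / (1 - ρ)) :=
  Rk2_eval_general lam1 lam2 ρ k hlam1 hlam2 hρ1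
end

section
/- Let λ1, λ2 > 0 and 0 ≤ ρ < 1. The secrecy-capacity integrand is integrable: the function (α,β) ↦ max(ln(1+α) − ln(1+β), 0) · f(α,β) is Lebesgue integrable on (0,∞) × (0,∞), where f(α,β) = Σ_{k=0}^∞ c_k (1/(λ1 λ2)) exp(-(α/λ1 + β/λ2)/(1-ρ)) (α/λ1)^k (β/λ2)^k and c_k = ρ^k / ((k!)^2 (1-ρ)^{2k+1}). -/
/-!
With `u = α / λ₁`, `v = β / λ₂` and `r = √ρ`, the density is
`exp (-(u + v) / (1 - ρ)) / (λ₁ λ₂ (1 - ρ)) * Σₖ (r u / (1 - ρ))ᵏ (r v / (1 - ρ))ᵏ / (k!)²`,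
and `Σₖ xᵏ yᵏ / (k!)² ≤ eˣ eʸ` termwise. Since `1 - ρ = (1 - r)(1 + r)`, this gives
`f(α, β) ≤ exp (-(u + v) / (1 + r)) / (λ₁ λ₂ (1 - ρ))`. The secrecy capacity is at most
`ln (1 + α) ≤ α`, so the integrand is dominated by a constant times `α e^{-aα} e^{-bβ}`,
which is integrable on the open quadrant.
-/

open MeasureTheory Real Set

theorem measurable_tsum_of_summable {α E : Type*} [MeasurableSpace α] [NormedAddCommGroup E]
    [MeasurableSpace E] [BorelSpace E] [SecondCountableTopology E] {f : ℕ → α → E}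
    (hf : ∀ i, Measurable (f i)) (hs : ∀ x, Summable fun i => f i x) :
    Measurable fun x => ∑' i, f i x :=
  measurable_of_tendsto_metrizable (fun _ => Finset.measurable_sum _ fun i _ => hf i)
    (tendsto_pi_nhds.2 fun x => (hs x).hasSum.tendsto_sum_nat)

theorem MeasureTheory.IntegrableOn.mul_prod {α β L : Type*} [MeasureSpace α] [MeasureSpace β]
    [NormedRing L] [SFinite (volume : Measure α)] [SigmaFinite (volume : Measure β)]
    {f : α → L} {g : β → L} {s : Set α} {t : Set β}
    (hf : IntegrableOn f s) (hg : IntegrableOn g t) :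
    IntegrableOn (fun p : α × β => f p.1 * g p.2) (s ×ˢ t) := by
  have := Integrable.mul_prod hf hg
  rwa [Measure.prod_restrict, ← Measure.volume_eq_prod] at this

theorem integrableOn_mul_exp_neg_mul {b : ℝ} (hb : 0 < b) :
    IntegrableOn (fun x : ℝ => x * exp (-b * x)) (Ioi 0) := by
  simpa only [rpow_one] using
    integrableOn_rpow_mul_exp_neg_mul_rpow (s := 1) (p := 1) (by norm_num) one_pos hb

theorem pow_mul_pow_div_factorial_sq_le {x y : ℝ} (hx : 0 ≤ x) (hy : 0 ≤ y) (k : ℕ) :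
    x ^ k * y ^ k / (k.factorial : ℝ) ^ 2 ≤ x ^ k / k.factorial * exp y := by
  rw [sq, ← div_mul_div_comm]
  exact mul_le_mul_of_nonneg_left (pow_div_factorial_le_exp _ hy k) (by positivity)

/-- For `x, y ≥ 0` this is the modified Bessel function `I₀ (2 √(x y))`. -/
noncomputable def besselSeries (x y : ℝ) : ℝ :=
  ∑' k : ℕ, x ^ k * y ^ k / (k.factorial : ℝ) ^ 2

theorem summable_besselSeries (x y : ℝ) :
    Summable fun k : ℕ => x ^ k * y ^ k / (k.factorial : ℝ) ^ 2 := by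
  refine .of_norm_bounded ((summable_pow_div_factorial |x|).mul_right (exp |y|)) fun k => ?_
  simpa only [norm_div, norm_mul, norm_pow, Real.norm_eq_abs, Nat.abs_cast]
    using pow_mul_pow_div_factorial_sq_le (abs_nonneg x) (abs_nonneg y) k

theorem besselSeries_nonneg {x y : ℝ} (hx : 0 ≤ x) (hy : 0 ≤ y) : 0 ≤ besselSeries x y :=
  tsum_nonneg fun k => by positivity

theorem besselSeries_le_exp_add {x y : ℝ} (hx : 0 ≤ x) (hy : 0 ≤ y) :
    besselSeries x y ≤ exp (x + y) :=
  calc besselSeries x y ≤ ∑' k : ℕ, x ^ k / k.factorial * exp y :=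
        (summable_besselSeries x y).tsum_le_tsum (pow_mul_pow_div_factorial_sq_le hx hy)
          ((summable_pow_div_factorial x).mul_right _)
    _ = exp (x + y) := by
        rw [tsum_mul_right, exp_add, exp_eq_exp_ℝ, NormedSpace.exp_eq_tsum_div]

theorem measurable_besselSeries : Measurable fun p : ℝ × ℝ => besselSeries p.1 p.2 :=
  measurable_tsum_of_summable (fun k => by fun_prop) fun p => summable_besselSeries p.1 p.2

noncomputable def corrExpDensity (lam1 lam2 ρ : ℝ) (p : ℝ × ℝ) : ℝ :=
  ∑' k : ℕ, (ρ ^ k / ((k.factorial : ℝ) ^ 2 * (1 - ρ) ^ (2 * k + 1))) *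
    (1 / (lam1 * lam2)) * Real.exp (-(p.1 / lam1 + p.2 / lam2) / (1 - ρ)) *
    (p.1 / lam1) ^ k * (p.2 / lam2) ^ k

theorem corrExpDensity_eq_besselSeries (lam1 lam2 : ℝ) {ρ : ℝ} (hρ : 0 ≤ ρ) (p : ℝ × ℝ) :
    corrExpDensity lam1 lam2 ρ p =
      exp (-(p.1 / lam1 + p.2 / lam2) / (1 - ρ)) / (lam1 * lam2 * (1 - ρ)) *
        besselSeries (√ρ * (p.1 / lam1) / (1 - ρ)) (√ρ * (p.2 / lam2) / (1 - ρ)) := by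
  rw [corrExpDensity, besselSeries, ← tsum_mul_left]
  congr 1 with k
  have hρk : ρ ^ k = √ρ ^ k * √ρ ^ k := by rw [← mul_pow, mul_self_sqrt hρ]
  rw [hρk]
  simp only [div_eq_mul_inv, mul_pow, inv_pow, pow_succ, pow_mul, mul_inv]
  ring

theorem measurable_corrExpDensity (lam1 lam2 : ℝ) {ρ : ℝ} (hρ : 0 ≤ ρ) :
    Measurable (corrExpDensity lam1 lam2 ρ) := by
  simp_rw [funext (corrExpDensity_eq_besselSeries lam1 lam2 hρ)]
  have hbessel := measurable_besselSeries.comp (f := fun p : ℝ × ℝ =>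
    (√ρ * (p.1 / lam1) / (1 - ρ), √ρ * (p.2 / lam2) / (1 - ρ))) (by fun_prop)
  exact Measurable.mul (by fun_prop) hbessel

theorem corrExpDensity_nonneg {lam1 lam2 ρ : ℝ} (hlam1 : 0 < lam1) (hlam2 : 0 < lam2)
    (hρ0 : 0 ≤ ρ) (hρ1 : ρ < 1) {p : ℝ × ℝ} (hp1 : 0 ≤ p.1) (hp2 : 0 ≤ p.2) :
    0 ≤ corrExpDensity lam1 lam2 ρ p := by
  have hs : 0 < 1 - ρ := sub_pos.2 hρ1
  rw [corrExpDensity_eq_besselSeries lam1 lam2 hρ0]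
  exact mul_nonneg (by positivity) (besselSeries_nonneg (by positivity) (by positivity))

theorem corrExpDensity_le {lam1 lam2 ρ : ℝ} (hlam1 : 0 < lam1) (hlam2 : 0 < lam2)
    (hρ0 : 0 ≤ ρ) (hρ1 : ρ < 1) {p : ℝ × ℝ} (hp1 : 0 ≤ p.1) (hp2 : 0 ≤ p.2) :
    corrExpDensity lam1 lam2 ρ p ≤
      exp (-(p.1 / lam1 + p.2 / lam2) / (1 + √ρ)) / (lam1 * lam2 * (1 - ρ)) := by
  have hs : 0 < 1 - ρ := sub_pos.2 hρ1
  set u := p.1 / lam1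
  set v := p.2 / lam2
  rw [corrExpDensity_eq_besselSeries lam1 lam2 hρ0]
  calc exp (-(u + v) / (1 - ρ)) / (lam1 * lam2 * (1 - ρ)) *
        besselSeries (√ρ * u / (1 - ρ)) (√ρ * v / (1 - ρ))
      ≤ exp (-(u + v) / (1 - ρ)) / (lam1 * lam2 * (1 - ρ)) *
          exp (√ρ * u / (1 - ρ) + √ρ * v / (1 - ρ)) :=
        mul_le_mul_of_nonneg_left (besselSeries_le_exp_add (by positivity) (by positivity))
          (by positivity)
    _ = exp (-(u + v) / (1 + √ρ)) / (lam1 * lam2 * (1 - ρ)) := by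
        rw [div_mul_eq_mul_div, ← exp_add]
        congr 2
        field_simp
        linear_combination (u + v) * sq_sqrt hρ0

noncomputable def secrecyCapacity (α β : ℝ) : ℝ :=
  max (log (1 + α) - log (1 + β)) 0

theorem measurable_secrecyCapacity : Measurable fun p : ℝ × ℝ => secrecyCapacity p.1 p.2 := by
  unfold secrecyCapacity
  fun_prop

theorem secrecyCapacity_nonneg (x y : ℝ) : 0 ≤ secrecyCapacity x y :=
  le_max_right _ _

theorem secrecyCapacity_le {x y : ℝ} (hx : 0 ≤ x) (hy : 0 ≤ y) : secrecyCapacity x y ≤ x := by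
  have hlogx : log (1 + x) ≤ x := by linarith [log_le_sub_one_of_pos (by linarith : 0 < 1 + x)]
  have hlogy : 0 ≤ log (1 + y) := log_nonneg (by linarith)
  exact max_le (by linarith) hx

theorem norm_secrecyCapacity_mul_corrExpDensity_le {lam1 lam2 ρ : ℝ} (hlam1 : 0 < lam1)
    (hlam2 : 0 < lam2) (hρ0 : 0 ≤ ρ) (hρ1 : ρ < 1) {p : ℝ × ℝ} (hp1 : 0 ≤ p.1) (hp2 : 0 ≤ p.2) :
    ‖secrecyCapacity p.1 p.2 * corrExpDensity lam1 lam2 ρ p‖ ≤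
      p.1 * exp (-(p.1 / lam1 + p.2 / lam2) / (1 + √ρ)) / (lam1 * lam2 * (1 - ρ)) := by
  have hdensity := corrExpDensity_nonneg hlam1 hlam2 hρ0 hρ1 hp1 hp2
  rw [norm_mul, Real.norm_of_nonneg (secrecyCapacity_nonneg _ _), Real.norm_of_nonneg hdensity,
    mul_div_assoc]
  exact mul_le_mul (secrecyCapacity_le hp1 hp2)
    (corrExpDensity_le hlam1 hlam2 hρ0 hρ1 hp1 hp2) hdensity hp1

theorem integrableOn_mul_exp_neg_div_add {lam1 lam2 c : ℝ} (hlam1 : 0 < lam1)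
    (hlam2 : 0 < lam2) (hc : 0 < c) :
    IntegrableOn (fun p : ℝ × ℝ => p.1 * exp (-(p.1 / lam1 + p.2 / lam2) / c))
      (Ioi 0 ×ˢ Ioi 0) := by
  refine ((integrableOn_mul_exp_neg_mul (by positivity : 0 < (lam1 * c)⁻¹)).mul_prod
    (exp_neg_integrableOn_Ioi 0 (by positivity : 0 < (lam2 * c)⁻¹))).congr_fun
    (fun p _ => ?_) (measurableSet_Ioi.prod measurableSet_Ioi)
  dsimp only
  rw [mul_assoc, ← exp_add]
  congr 2
  ring

/-- the secrecy-capacity integrand is Lebesgue integrable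
on (0,∞) × (0,∞). -/
theorem secrecy_integrand_integrable
    (lam1 lam2 ρ : ℝ) (hlam1 : 0 < lam1) (hlam2 : 0 < lam2)
    (hρ0 : 0 ≤ ρ) (hρ1 : ρ < 1) :
    IntegrableOn
      (fun p : ℝ × ℝ =>
        max (Real.log (1 + p.1) - Real.log (1 + p.2)) 0 *
          ∑' k : ℕ, (ρ ^ k / ((k.factorial : ℝ) ^ 2 * (1 - ρ) ^ (2 * k + 1))) *
            (1 / (lam1 * lam2)) * Real.exp (-(p.1 / lam1 + p.2 / lam2) / (1 - ρ)) *
            (p.1 / lam1) ^ k * (p.2 / lam2) ^ k)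
      (Ioi (0:ℝ) ×ˢ Ioi (0:ℝ)) := by
  change IntegrableOn
    (fun p : ℝ × ℝ => secrecyCapacity p.1 p.2 * corrExpDensity lam1 lam2 ρ p) _
  have hdominant := (integrableOn_mul_exp_neg_div_add hlam1 hlam2
    (by positivity : 0 < 1 + √ρ)).div_const (lam1 * lam2 * (1 - ρ))
  have hmeas : Measurable fun p : ℝ × ℝ =>
      secrecyCapacity p.1 p.2 * corrExpDensity lam1 lam2 ρ p :=
    measurable_secrecyCapacity.mul (measurable_corrExpDensity lam1 lam2 hρ0)
  refine hdominant.mono' hmeas.aestronglyMeasurable.restrict ?_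
  filter_upwards [ae_restrict_mem (measurableSet_Ioi.prod measurableSet_Ioi)] with p hp
  exact norm_secrecyCapacity_mul_corrExpDensity_le hlam1 hlam2 hρ0 hρ1 hp.1.le hp.2.le
end

section
/- (Independent-channel special case of Theorem 1, recovering [7]) Let λ1, λ2 > 0. For independent exponential SNRs, i.e. joint density f_0(α,β) = (1/(λ1 λ2)) e^{−α/λ1 − β/λ2}, the average secrecy capacity satisfies ∫_0^∞ ∫_0^∞ max(ln(1+α) − ln(1+β), 0) f_0(α,β) dα dβ = e^{1/λ1} E_1(1/λ1) − e^{1/λ1 + 1/λ2} E_1(1/λ1 + 1/λ2). -/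
/-!
With `a = 1/λ₁` and `b = 1/λ₂` the density factors as `a b e^{-aα} e^{-bβ}`. For fixed `β` the
integrand vanishes for `α ≤ β`, and integrating by parts against `e^{-aα}` on `(β, ∞)` turns
`log (1 + α) - log (1 + β)` into `(1 + α)⁻¹`: the inner integral is `T_a(β) / a`, where
`T_a(u) = ∫_u^∞ e^{-ax} / (1 + x) dx`. A second integration by parts, now using
`T_a' = -e^{-ax} / (1 + x)`, gives `∫_0^∞ T_a(β) e^{-bβ} dβ = (T_a(0) - T_{a+b}(0)) / b`, and the
substitution `t = 1 + x` identifies `T_c(0) = e^c E₁(c)`.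
-/

open MeasureTheory Real Set

open Filter Topology

theorem integral_Ioi_comp_const_add {E : Type*} [NormedAddCommGroup E] [NormedSpace ℝ E]
    (f : ℝ → E) (c d : ℝ) : ∫ x in Ioi c, f (d + x) = ∫ x in Ioi (d + c), f x := by
  have h := (measurePreserving_add_left volume d).setIntegral_preimage_emb
    (measurableEmbedding_addLeft d) f (Ioi (d + c))
  rwa [preimage_const_add_Ioi, add_sub_cancel_left] at h

theorem integral_Ioi_mul_exp_neg_mul {G g : ℝ → ℝ} {a c : ℝ} (ha : 0 < a)
    (hGc : ContinuousWithinAt G (Ioi c) c) (hG : ∀ x ∈ Ioi c, HasDerivAt G (g x) x)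
    (hGint : IntegrableOn (fun x => G x * exp (-a * x)) (Ioi c))
    (hgint : IntegrableOn (fun x => g x * exp (-a * x)) (Ioi c))
    (hlim : Tendsto (fun x => G x * exp (-a * x)) atTop (𝓝 0)) :
    ∫ x in Ioi c, G x * exp (-a * x) =
      (G c * exp (-a * c) + ∫ x in Ioi c, g x * exp (-a * x)) / a := by
  set v : ℝ → ℝ := fun x => -exp (-a * x) / a
  have hv : ∀ x ∈ Ioi c, HasDerivAt v (exp (-a * x)) x := by
    intro x _
    refine (((hasDerivAt_id x).const_mul (-a)).exp.neg.div_const a).congr_deriv ?_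
    simp only [id]
    field_simp
  have hgv : g * v = fun x => -(g x * exp (-a * x)) / a := by
    ext x; simp only [v, Pi.mul_apply]; ring
  have hGv : G * v = fun x => -(G x * exp (-a * x)) / a := by
    ext x; simp only [v, Pi.mul_apply]; ring
  have hparts := integral_Ioi_mul_deriv_eq_deriv_mul hG hv hGint
    (hgv ▸ hgint.neg.div_const a) (a' := G c * v c)
    ((hGc.mul (by fun_prop : Continuous v).continuousWithinAt).tendsto)
    (b' := 0) (by simpa [hGv] using hlim.neg.div_const a)
  rw [hparts, ← Pi.mul_def g v, hgv, integral_div, integral_neg]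
  simp only [v]
  ring

noncomputable def shiftedExpTail (a u : ℝ) : ℝ := ∫ x in Ioi u, (1 + x)⁻¹ * exp (-a * x)

section shiftedExpTail

variable {a : ℝ}

theorem integrableOn_inv_one_add_mul_exp_neg_mul (ha : 0 < a) {u : ℝ} (hu : -1 < u) :
    IntegrableOn (fun x => (1 + x)⁻¹ * exp (-a * x)) (Ioi u) := by
  refine ((exp_neg_integrableOn_Ioi u ha).const_mul (1 + u)⁻¹).mono'
    (by fun_prop) ?_
  filter_upwards [ae_restrict_mem measurableSet_Ioi] with x (hx : u < x)
  have hu' : 0 < 1 + u := by linarith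
  have hx' : 0 < 1 + x := by linarith
  rw [norm_of_nonneg (by positivity)]
  gcongr

theorem hasDerivAt_shiftedExpTail (ha : 0 < a) {u : ℝ} (hu : -1 < u) :
    HasDerivAt (shiftedExpTail a) (-((1 + u)⁻¹ * exp (-a * u))) u := by
  set f : ℝ → ℝ := fun x => (1 + x)⁻¹ * exp (-a * x)
  have hf : ContinuousOn f (Ioi (-1)) := fun x (hx : -1 < x) =>
    ContinuousAt.continuousWithinAt (by fun_prop (disch := linarith))
  have hprim : HasDerivAt (fun v => ∫ x in u..v, f x) (f u) u :=
    intervalIntegral.integral_hasDerivAt_right IntervalIntegrable.refl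
      (hf.stronglyMeasurableAtFilter isOpen_Ioi u hu) (hf.continuousAt (Ioi_mem_nhds hu))
  refine (hprim.const_sub (shiftedExpTail a u)).congr_of_eventuallyEq ?_
  filter_upwards [Ioi_mem_nhds hu] with v (hv : -1 < v)
  rw [← intervalIntegral.integral_Ioi_sub_Ioi' (integrableOn_inv_one_add_mul_exp_neg_mul ha hu)
    (integrableOn_inv_one_add_mul_exp_neg_mul ha hv), shiftedExpTail, shiftedExpTail,
    sub_sub_cancel]

theorem shiftedExpTail_nonneg {u : ℝ} (hu : -1 ≤ u) : 0 ≤ shiftedExpTail a u :=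
  setIntegral_nonneg measurableSet_Ioi fun x (hx : u < x) => by
    have : 0 < 1 + x := by linarith
    positivity

theorem shiftedExpTail_antitoneOn (ha : 0 < a) : AntitoneOn (shiftedExpTail a) (Ioi (-1)) := by
  intro u (hu : -1 < u) v _ huv
  refine setIntegral_mono_set (integrableOn_inv_one_add_mul_exp_neg_mul ha hu) ?_
    (Ioi_subset_Ioi huv).eventuallyLE
  filter_upwards [ae_restrict_mem measurableSet_Ioi] with x (hx : u < x)
  have : 0 < 1 + x := by linarith
  positivity

theorem shiftedExpTail_zero (a : ℝ) : shiftedExpTail a 0 = exp a * E1 a := by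
  have hshift : ∀ x : ℝ, (1 + x)⁻¹ * exp (-a * x) = exp a * (exp (-a * (1 + x)) / (1 + x)) := by
    intro x
    rw [mul_div_assoc', ← exp_add]
    ring_nf
  simp_rw [shiftedExpTail, hshift]
  rw [integral_Ioi_comp_const_add (fun t => exp a * (exp (-a * t) / t)), add_zero,
    integral_const_mul, E1]

theorem integral_shiftedExpTail_mul_exp_neg_mul (ha : 0 < a) {b : ℝ} (hb : 0 < b) :
    ∫ x in Ioi 0, shiftedExpTail a x * exp (-b * x) =
      (shiftedExpTail a 0 - shiftedExpTail (a + b) 0) / b := by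
  have hcont : ContinuousOn (shiftedExpTail a) (Ici 0) := fun x (hx : 0 ≤ x) =>
    (hasDerivAt_shiftedExpTail ha (show -1 < x by linarith)).continuousAt.continuousWithinAt
  have hbound : ∀ x ∈ Ici (0 : ℝ), ‖shiftedExpTail a x * exp (-b * x)‖ ≤
      shiftedExpTail a 0 * exp (-b * x) := by
    intro x (hx : 0 ≤ x)
    rw [norm_of_nonneg (mul_nonneg (shiftedExpTail_nonneg (by linarith)) (exp_pos _).le)]
    gcongr
    exact shiftedExpTail_antitoneOn ha (by norm_num) (show -1 < x by linarith) hx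
  have hexp : ∀ x, -((1 + x)⁻¹ * exp (-a * x)) * exp (-b * x) =
      -((1 + x)⁻¹ * exp (-(a + b) * x)) := by
    intro x
    rw [neg_mul, mul_assoc, ← exp_add]
    ring_nf
  have hGint : IntegrableOn (fun x => shiftedExpTail a x * exp (-b * x)) (Ioi 0) :=
    ((exp_neg_integrableOn_Ioi 0 hb).const_mul (shiftedExpTail a 0)).mono'
      (((hcont.mono Ioi_subset_Ici_self).mul (by fun_prop)).aestronglyMeasurable measurableSet_Ioi)
      ((ae_restrict_mem measurableSet_Ioi).mono fun x hx => hbound x (Ioi_subset_Ici_self hx))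
  have hgint : IntegrableOn (fun x => -((1 + x)⁻¹ * exp (-a * x)) * exp (-b * x)) (Ioi 0) :=
    (integrableOn_inv_one_add_mul_exp_neg_mul (add_pos ha hb) (by norm_num)).neg.congr_fun
      (fun x _ => (hexp x).symm) measurableSet_Ioi
  have hlim : Tendsto (fun x => shiftedExpTail a x * exp (-b * x)) atTop (𝓝 0) :=
    squeeze_zero_norm' ((eventually_ge_atTop 0).mono hbound)
      (by simpa using (tendsto_exp_atBot.comp
        (tendsto_id.const_mul_atTop_of_neg (neg_neg_of_pos hb))).const_mul (shiftedExpTail a 0))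
  have hparts := integral_Ioi_mul_exp_neg_mul hb
    ((hcont 0 (mem_Ici.2 le_rfl)).mono Ioi_subset_Ici_self)
    (fun x (hx : 0 < x) => hasDerivAt_shiftedExpTail ha (show -1 < x by linarith)) hGint hgint hlim
  rw [hparts]
  simp only [hexp, integral_neg, mul_zero, exp_zero, mul_one, shiftedExpTail]
  ring

end shiftedExpTail

theorem integral_max_log_sub_mul_exp_neg_mul {a β : ℝ} (ha : 0 < a) (hβ : 0 ≤ β) :
    ∫ α in Ioi 0, max (log (1 + α) - log (1 + β)) 0 * exp (-a * α) = shiftedExpTail a β / a := by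
  set G : ℝ → ℝ := fun α => log (1 + α) - log (1 + β)
  have hG_bounds : ∀ α ∈ Ici β, 0 ≤ G α ∧ G α ≤ α := by
    intro α (hα : β ≤ α)
    have hlogβ : 0 ≤ log (1 + β) := log_nonneg (by linarith)
    have hlogα : log (1 + α) ≤ α := by linarith [log_le_sub_one_of_pos (by linarith : 0 < 1 + α)]
    exact ⟨sub_nonneg.2 (log_le_log (by linarith) (by linarith)), by linarith⟩
  have hG_deriv : ∀ α ∈ Ioi (-1 : ℝ), HasDerivAt G (1 + α)⁻¹ α := fun α (hα : -1 < α) => by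
    simpa [G] using (((hasDerivAt_id' α).const_add 1).log (by linarith)).sub_const (log (1 + β))
  have hmul_exp_int : IntegrableOn (fun α => α * exp (-a * α)) (Ioi β) := by
    simpa using (integrableOn_rpow_mul_exp_neg_mul_rpow (s := 1) (p := 1) (by norm_num)
      (by norm_num) ha).mono_set (Ioi_subset_Ioi hβ)
  have hGexp_bound : ∀ α ∈ Ici β, ‖G α * exp (-a * α)‖ ≤ α * exp (-a * α) := fun α hα => by
    rw [norm_of_nonneg (mul_nonneg (hG_bounds α hα).1 (exp_pos _).le)]
    gcongr
    exact (hG_bounds α hα).2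
  calc ∫ α in Ioi 0, max (log (1 + α) - log (1 + β)) 0 * exp (-a * α)
      = ∫ α in Ioi β, G α * exp (-a * α) := by
        rw [setIntegral_eq_of_subset_of_forall_sdiff_eq_zero measurableSet_Ioi
          (Ioi_subset_Ioi hβ) fun α hα => ?_]
        · refine setIntegral_congr_fun measurableSet_Ioi fun α hα => ?_
          rw [max_eq_left (hG_bounds α (Ioi_subset_Ici_self hα)).1]
        · have hαβ : α ≤ β := not_lt.1 hα.2
          rw [max_eq_right (sub_nonpos.2 (log_le_log (by linarith [hα.1.out]) (by linarith))),
            zero_mul]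
    _ = shiftedExpTail a β / a := by
        rw [integral_Ioi_mul_exp_neg_mul ha
          (hG_deriv β (show -1 < β by linarith)).continuousAt.continuousWithinAt
          (fun α hα => hG_deriv α (show -1 < α by linarith [hα.out]))
          (hmul_exp_int.mono' (by fun_prop) ((ae_restrict_mem measurableSet_Ioi).mono
            fun α hα => hGexp_bound α (Ioi_subset_Ici_self hα)))
          (integrableOn_inv_one_add_mul_exp_neg_mul ha (by linarith))
          (squeeze_zero_norm' ((eventually_ge_atTop β).mono hGexp_bound)
            (by simpa using tendsto_rpow_mul_exp_neg_mul_atTop_nhds_zero 1 a ha))]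
        simp [G, shiftedExpTail]

/-- independent-channel special case of Theorem 1
(average secrecy capacity for independent exponential SNRs). -/
theorem average_secrecy_capacity_independent
    (lam1 lam2 : ℝ) (hlam1 : 0 < lam1) (hlam2 : 0 < lam2) :
    ∫ β in Ioi (0:ℝ), ∫ α in Ioi (0:ℝ),
        max (Real.log (1 + α) - Real.log (1 + β)) 0 *
          ((1 / (lam1 * lam2)) * Real.exp (-α / lam1 - β / lam2)) =
      Real.exp (1 / lam1) * E1 (1 / lam1) -
        Real.exp (1 / lam1 + 1 / lam2) * E1 (1 / lam1 + 1 / lam2) := by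
  set a := 1 / lam1
  set b := 1 / lam2
  have ha : 0 < a := by positivity
  have hb : 0 < b := by positivity
  have hinner : ∀ β ∈ Ioi (0 : ℝ), ∫ α in Ioi (0:ℝ),
      max (log (1 + α) - log (1 + β)) 0 * ((1 / (lam1 * lam2)) * exp (-α / lam1 - β / lam2)) =
        b * (shiftedExpTail a β * exp (-b * β)) := by
    intro β (hβ : 0 < β)
    have hdensity : ∀ α, (1 / (lam1 * lam2)) * exp (-α / lam1 - β / lam2) =
        a * b * exp (-b * β) * exp (-a * α) := by
      intro α
      rw [mul_assoc, ← exp_add]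
      simp only [a, b]
      field_simp
      ring_nf
    simp_rw [hdensity, mul_left_comm _ (a * b * _), integral_const_mul,
      integral_max_log_sub_mul_exp_neg_mul ha hβ.le]
    field_simp
  rw [setIntegral_congr_fun measurableSet_Ioi hinner, integral_const_mul,
    integral_shiftedExpTail_mul_exp_neg_mul ha hb, shiftedExpTail_zero, shiftedExpTail_zero,
    exp_add]
  field_simp
end

section
/- (Independent-channel special case of Theorem 2) Let λ1, λ2 > 0 and let R > 0. For independent exponential SNRs with joint density f_0(α,β) = (1/(λ1 λ2)) e^{−α/λ1 − β/λ2}, the secrecy outage probability satisfies P_out(R) = 1 − ∫_0^∞ ( ∫_{e^R (1+β) − 1}^∞ f_0(α,β) dα ) dβ = 1 − (λ1 / (λ1 + e^R λ2)) exp(−(e^R − 1)/λ1). -/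
/-!
For fixed `β` the `α`-integral is an exponential tail, and the factor `e^{-e^R β / λ₁}` it
produces combines with `e^{-β / λ₂}` into a single exponential in `β`, of mean
`λ₁ λ₂ / (λ₁ + e^R λ₂)`; integrating that over `β > 0` gives the closed form.
-/

open MeasureTheory Real Set

lemma integral_exp_neg_div_Ioi {μ : ℝ} (hμ : 0 < μ) (c : ℝ) :
    ∫ x in Ioi c, exp (-x / μ) = μ * exp (-c / μ) := by
  have h := integral_exp_mul_Ioi (neg_lt_zero.mpr (inv_pos.mpr hμ)) c
  simp only [neg_mul, ← neg_div, inv_mul_eq_div, div_neg, neg_neg] at h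
  rw [h]
  field_simp

lemma integral_joint_exp_density_Ioi {lam1 lam2 : ℝ} (hlam1 : 0 < lam1) (hlam2 : 0 < lam2)
    (R β : ℝ) :
    ∫ α in Ioi (exp R * (1 + β) - 1), (1 / (lam1 * lam2)) * exp (-α / lam1 - β / lam2) =
      exp (-(exp R - 1) / lam1) / lam2 *
        exp (-β / (lam1 * lam2 / (lam1 + exp R * lam2))) := by
  have split : ∀ α : ℝ, (1 / (lam1 * lam2)) * exp (-α / lam1 - β / lam2) =
      exp (-β / lam2) / (lam1 * lam2) * exp (-α / lam1) := fun α => by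
    rw [sub_eq_add_neg, exp_add, ← neg_div]
    ring
  simp_rw [split]
  have exponents : exp (-β / lam2) * exp (-(exp R * (1 + β) - 1) / lam1) =
      exp (-(exp R - 1) / lam1) * exp (-β / (lam1 * lam2 / (lam1 + exp R * lam2))) := by
    rw [← exp_add, ← exp_add]
    congr 1
    field_simp
    ring
  rw [integral_const_mul, integral_exp_neg_div_Ioi hlam1]
  calc exp (-β / lam2) / (lam1 * lam2) * (lam1 * exp (-(exp R * (1 + β) - 1) / lam1))
      = exp (-β / lam2) * exp (-(exp R * (1 + β) - 1) / lam1) / lam2 := by field_simp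
    _ = _ := by rw [exponents]; ring

theorem outage_probability_independent_general
    (lam1 lam2 R : ℝ) (hlam1 : 0 < lam1) (hlam2 : 0 < lam2) :
    1 - (∫ β in Ioi (0:ℝ), ∫ α in Ioi (Real.exp R * (1 + β) - 1),
        (1 / (lam1 * lam2)) * Real.exp (-α / lam1 - β / lam2)) =
      1 - (lam1 / (lam1 + Real.exp R * lam2)) *
        Real.exp (-(Real.exp R - 1) / lam1) := by
  simp_rw [integral_joint_exp_density_Ioi hlam1 hlam2 R]
  rw [integral_const_mul, integral_exp_neg_div_Ioi (by positivity), neg_zero, zero_div, exp_zero]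
  field_simp

/-- independent-channel special case of Theorem 2
(secrecy outage probability for independent exponential SNRs). -/
theorem outage_probability_independent
    (lam1 lam2 R : ℝ) (hlam1 : 0 < lam1) (hlam2 : 0 < lam2) (hR : 0 < R) :
    1 - (∫ β in Ioi (0:ℝ), ∫ α in Ioi (Real.exp R * (1 + β) - 1),
        (1 / (lam1 * lam2)) * Real.exp (-α / lam1 - β / lam2)) =
      1 - (lam1 / (lam1 + Real.exp R * lam2)) *
        Real.exp (-(Real.exp R - 1) / lam1) :=
  outage_probability_independent_general lam1 lam2 R hlam1 hlam2
end

section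
/- Let λ1, λ2 > 0, 0 ≤ ρ < 1, and let k be a natural number. Fubini-type decomposition of the k-th term of the average secrecy capacity: ∫_0^∞ ∫_0^∞ max(ln(1+α) − ln(1+β), 0) f_k(α,β) dα dβ = R_k^1 − R_k^2, where f_k(α,β) = (1/(λ1 λ2)) exp(−(α/λ1 + β/λ2)/(1−ρ)) (α/λ1)^k (β/λ2)^k, R_k^1 = ∫_0^∞ ln(1+λ1 u) e^{−u/(1−ρ)} u^k ( ∫_0^{λ1 u/λ2} e^{−v/(1−ρ)} v^k dv ) du, and R_k^2 = ∫_0^∞ ln(1+λ2 v) e^{−v/(1−ρ)} v^k ( ∫_{λ2 v/λ1}^∞ e^{−u/(1−ρ)} u^k du ) dv. -/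
/-!
After the substitution `α = λ₁ u`, `β = λ₂ v` the density factors as `g u * g v` with
`g t = exp (-t / (1 - ρ)) * t ^ k`. Writing `max (a - b) 0` as `a - b` on the region `b < a`
splits the integrand into two products, each integrable on the quarter plane because
`log (1 + c t) ≤ c t`; Fubini then evaluates the first one `v`-first and the second one
`u`-first. Since `t ↦ log (1 + t)` is strictly increasing, the region
`log (1 + λ₂ v) < log (1 + λ₁ u)` is `λ₂ v < λ₁ u`, whose slices give the limits of
`R_k^1` and `R_k^2`.
-/

open MeasureTheory Real Set

section MaxSub

variable {α β : Type*} [MeasurableSpace α] [MeasurableSpace β]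
  {μ : Measure α} {ν : Measure β} [SigmaFinite μ] [SigmaFinite ν] {a f : α → ℝ} {b g : β → ℝ}

theorem integral_integral_max_sub_mul_mul (ha : Measurable a) (hb : Measurable b)
    (hf : Integrable f μ) (haf : Integrable (fun x => a x * f x) μ)
    (hg : Integrable g ν) (hbg : Integrable (fun y => b y * g y) ν) :
    ∫ y, ∫ x, max (a x - b y) 0 * (f x * g y) ∂μ ∂ν =
      (∫ x, a x * f x * ∫ y in {y | b y < a x}, g y ∂ν ∂μ) -
        ∫ y, b y * g y * ∫ x in {x | b y < a x}, f x ∂μ ∂ν := by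
  set S : Set (α × β) := {z | b z.2 < a z.1}
  have hS : MeasurableSet S := measurableSet_lt (hb.comp measurable_snd) (ha.comp measurable_fst)
  have h₁ : Integrable (S.indicator fun z => a z.1 * f z.1 * g z.2) (μ.prod ν) :=
    (haf.mul_prod hg).indicator hS
  have h₂ : Integrable (S.indicator fun z => f z.1 * (b z.2 * g z.2)) (μ.prod ν) :=
    (hf.mul_prod hbg).indicator hS
  have hsplit : (fun z : α × β => max (a z.1 - b z.2) 0 * (f z.1 * g z.2)) =
      (S.indicator fun z => a z.1 * f z.1 * g z.2) -
        S.indicator fun z => f z.1 * (b z.2 * g z.2) := by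
    ext z
    by_cases hz : b z.2 < a z.1
    · simp only [Pi.sub_apply, indicator_of_mem (s := S) hz, max_eq_left (sub_nonneg.2 hz.le)]
      ring
    · simp only [Pi.sub_apply, indicator_of_notMem (s := S) hz, sub_zero,
        max_eq_right (sub_nonpos.2 (not_lt.1 hz)), zero_mul]
  rw [← integral_prod_symm (fun z : α × β => max (a z.1 - b z.2) 0 * (f z.1 * g z.2))
    (hsplit ▸ h₁.sub h₂), hsplit, integral_sub' h₁ h₂, integral_prod _ h₁,
    integral_prod_symm _ h₂]
  congr 1 <;> refine integral_congr_ae (ae_of_all _ fun _ => ?_) <;> dsimp only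
  · rw [← integral_const_mul, ← integral_indicator (measurableSet_lt hb measurable_const)]
    rfl
  · rw [← integral_const_mul, ← integral_indicator (measurableSet_lt measurable_const ha)]
    congr 1
    ext x
    simp only [indicator, S, mem_ofPred_eq]
    split_ifs <;> ring

end MaxSub

theorem integral_Ioi_integral_Ioi_comp_mul_left (F : ℝ → ℝ → ℝ) {c d : ℝ} (hc : 0 < c)
    (hd : 0 < d) :
    ∫ y in Ioi 0, ∫ x in Ioi 0, F x y =
      d * c * ∫ y in Ioi 0, ∫ x in Ioi 0, F (c * x) (d * y) := by
  have comp (G : ℝ → ℝ) {e : ℝ} (he : 0 < e) :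
      ∫ x in Ioi 0, G x = e * ∫ x in Ioi 0, G (e * x) := by
    simpa using (integral_comp_mul_left_Ioi' G 0 he).symm
  rw [comp _ hd, mul_assoc, ← integral_const_mul c]
  exact congrArg (d * ·) (integral_congr_ae (ae_of_all _ fun y => comp (F · (d * y)) hc))

theorem integrableOn_exp_neg_div_mul_pow {s : ℝ} (hs : 0 < s) (k : ℕ) :
    IntegrableOn (fun t => exp (-t / s) * t ^ k) (Ioi 0) := by
  refine (integrableOn_rpow_mul_exp_neg_mul_rpow (p := 1) (s := k) (b := s⁻¹)
    (by linarith [k.cast_nonneg (α := ℝ)]) one_pos (inv_pos.2 hs)).congr_fun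
    (fun t _ => ?_) measurableSet_Ioi
  simp only [rpow_one, rpow_natCast]
  ring_nf

theorem abs_log_one_add_le {x : ℝ} (hx : 0 ≤ x) : |log (1 + x)| ≤ x := by
  rw [abs_of_nonneg (log_nonneg (by linarith))]
  linarith [log_le_sub_one_of_pos (show 0 < 1 + x by linarith)]

theorem integrableOn_Ioi_log_one_add_mul_mul {f : ℝ → ℝ} {c : ℝ} (hc : 0 ≤ c)
    (hf : AEStronglyMeasurable f (volume.restrict (Ioi 0)))
    (htf : IntegrableOn (fun t => t * f t) (Ioi 0)) :
    IntegrableOn (fun t => log (1 + c * t) * f t) (Ioi 0) := by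
  refine (htf.norm.const_mul c).mono' ((by fun_prop : Measurable fun t => log (1 + c * t))
    |>.aestronglyMeasurable.mul hf) ((ae_restrict_iff' measurableSet_Ioi).2 (ae_of_all _ ?_))
  intro t (ht : 0 < t)
  rw [norm_mul, norm_mul, norm_eq_abs, norm_eq_abs, norm_eq_abs, abs_of_pos ht, ← mul_assoc]
  exact mul_le_mul_of_nonneg_right (abs_log_one_add_le (by positivity)) (abs_nonneg _)

theorem log_one_add_lt_log_one_add_iff {x y : ℝ} (hx : 0 ≤ x) (hy : 0 ≤ y) :
    log (1 + x) < log (1 + y) ↔ x < y := by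
  rw [log_lt_log_iff (by linarith) (by linarith), add_lt_add_iff_left]

theorem setOf_log_one_add_mul_lt_const_inter_Ioi {c d u : ℝ} (hc : 0 < c) (hd : 0 < d)
    (hu : 0 < u) :
    {v | log (1 + d * v) < log (1 + c * u)} ∩ Ioi 0 = Ioo 0 (c * u / d) := by
  ext v
  simp only [mem_inter_iff, mem_ofPred_eq, mem_Ioi, mem_Ioo, lt_div_iff₀ hd]
  constructor
  · rintro ⟨h, hv⟩
    have := (log_one_add_lt_log_one_add_iff (by positivity) (by positivity)).1 h
    exact ⟨hv, by linarith⟩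
  · rintro ⟨hv, h⟩
    exact ⟨(log_one_add_lt_log_one_add_iff (by positivity) (by positivity)).2 (by linarith), hv⟩

theorem setOf_const_lt_log_one_add_mul_inter_Ioi {c d v : ℝ} (hc : 0 < c) (hd : 0 < d)
    (hv : 0 < v) :
    {u | log (1 + d * v) < log (1 + c * u)} ∩ Ioi 0 = Ioi (d * v / c) := by
  ext u
  simp only [mem_inter_iff, mem_ofPred_eq, mem_Ioi, div_lt_iff₀ hc]
  constructor
  · rintro ⟨h, hu⟩
    linarith [(log_one_add_lt_log_one_add_iff (by positivity) (by positivity)).1 h]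
  · intro h
    have hu : 0 < u := by nlinarith
    exact ⟨(log_one_add_lt_log_one_add_iff (by positivity) (by positivity)).2 (by linarith), hu⟩

theorem kth_term_decomposition_general
    (lam1 lam2 ρ : ℝ) (k : ℕ) (hlam1 : 0 < lam1) (hlam2 : 0 < lam2)
    (hρ1 : ρ < 1) :
    ∫ β in Ioi (0:ℝ), ∫ α in Ioi (0:ℝ),
        max (Real.log (1 + α) - Real.log (1 + β)) 0 *
          ((1 / (lam1 * lam2)) * Real.exp (-(α / lam1 + β / lam2) / (1 - ρ)) *
            (α / lam1) ^ k * (β / lam2) ^ k) =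
      (∫ u in Ioi (0:ℝ), Real.log (1 + lam1 * u) * Real.exp (-u / (1 - ρ)) * u ^ k *
          ∫ v in (0:ℝ)..(lam1 * u / lam2), Real.exp (-v / (1 - ρ)) * v ^ k) -
        ∫ v in Ioi (0:ℝ), Real.log (1 + lam2 * v) * Real.exp (-v / (1 - ρ)) * v ^ k *
          ∫ u in Ioi (lam2 * v / lam1), Real.exp (-u / (1 - ρ)) * u ^ k := by
  have hs : 0 < 1 - ρ := by linarith
  set g : ℝ → ℝ := fun t => exp (-t / (1 - ρ)) * t ^ k
  have hg : IntegrableOn g (Ioi 0) := integrableOn_exp_neg_div_mul_pow hs k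
  have hlog {c : ℝ} (hc : 0 < c) : IntegrableOn (fun t => log (1 + c * t) * g t) (Ioi 0) :=
    integrableOn_Ioi_log_one_add_mul_mul hc.le hg.aestronglyMeasurable <|
      (integrableOn_exp_neg_div_mul_pow hs (k + 1)).congr_fun (fun t _ => by ring) measurableSet_Ioi
  have hdensity (u v : ℝ) :
      max (log (1 + lam1 * u) - log (1 + lam2 * v)) 0 *
        (1 / (lam1 * lam2) * exp (-(lam1 * u / lam1 + lam2 * v / lam2) / (1 - ρ)) *
          (lam1 * u / lam1) ^ k * (lam2 * v / lam2) ^ k) =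
      (lam2 * lam1)⁻¹ * (max (log (1 + lam1 * u) - log (1 + lam2 * v)) 0 * (g u * g v)) := by
    rw [mul_div_cancel_left₀ u hlam1.ne', mul_div_cancel_left₀ v hlam2.ne', neg_add, add_div,
      exp_add]
    ring
  rw [integral_Ioi_integral_Ioi_comp_mul_left _ hlam1 hlam2]
  simp_rw [hdensity, integral_const_mul]
  rw [← mul_assoc, mul_inv_cancel₀ (mul_pos hlam2 hlam1).ne', one_mul]
  refine (integral_integral_max_sub_mul_mul (by fun_prop) (by fun_prop) hg (hlog hlam1) hg
    (hlog hlam2)).trans ?_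
  congr 1 <;> refine setIntegral_congr_fun measurableSet_Ioi fun x (hx : 0 < x) => ?_
  · rw [Measure.restrict_restrict (measurableSet_lt (by fun_prop) measurable_const),
      setOf_log_one_add_mul_lt_const_inter_Ioi hlam1 hlam2 hx,
      intervalIntegral.integral_of_le (by positivity), integral_Ioc_eq_integral_Ioo]
    ring
  · rw [Measure.restrict_restrict (measurableSet_lt measurable_const (by fun_prop)),
      setOf_const_lt_log_one_add_mul_inter_Ioi hlam1 hlam2 hx]
    ring

/-- Fubini-type decomposition of the k-th term of the average
secrecy capacity into R_k^1 − R_k^2. -/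
theorem kth_term_decomposition
    (lam1 lam2 ρ : ℝ) (k : ℕ) (hlam1 : 0 < lam1) (hlam2 : 0 < lam2)
    (hρ0 : 0 ≤ ρ) (hρ1 : ρ < 1) :
    ∫ β in Ioi (0:ℝ), ∫ α in Ioi (0:ℝ),
        max (Real.log (1 + α) - Real.log (1 + β)) 0 *
          ((1 / (lam1 * lam2)) * Real.exp (-(α / lam1 + β / lam2) / (1 - ρ)) *
            (α / lam1) ^ k * (β / lam2) ^ k) =
      (∫ u in Ioi (0:ℝ), Real.log (1 + lam1 * u) * Real.exp (-u / (1 - ρ)) * u ^ k *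
          ∫ v in (0:ℝ)..(lam1 * u / lam2), Real.exp (-v / (1 - ρ)) * v ^ k) -
        ∫ v in Ioi (0:ℝ), Real.log (1 + lam2 * v) * Real.exp (-v / (1 - ρ)) * v ^ k *
          ∫ u in Ioi (lam2 * v / lam1), Real.exp (-u / (1 - ρ)) * u ^ k :=
  kth_term_decomposition_general lam1 lam2 ρ k hlam1 hlam2 hρ1
end

section
/- Let λ, μ > 0 and let k be a natural number, and let F(λ,k,μ) = ∫_0^∞ ln(1+λx) e^{−μx} x^k dx. Then F(λ,k,μ) = (k!/μ^k) F(λ,0,μ) + Σ_{j=1}^{k} (k!/j!) (λ/μ^{k−j+1}) ∫_0^∞ x^j e^{−μx}/(1+λx) dx. -/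
open MeasureTheory Real Set Filter Topology

lemma int_pow_exp (μ : ℝ) (hμ : 0 < μ) (k : ℕ) :
    IntegrableOn (fun x : ℝ => x ^ k * Real.exp (-μ * x)) (Ioi 0) := by
  have h := integrableOn_rpow_mul_exp_neg_mul_rpow (p := 1) (s := (k : ℝ)) (b := μ)
    (by exact_mod_cast neg_one_lt_zero.trans_le (Nat.cast_nonneg k)) zero_lt_one hμ
  refine h.congr_fun (fun x hx => ?_) measurableSet_Ioi
  beta_reduce
  rw [Real.rpow_one, Real.rpow_natCast]

lemma int_ratio (lam μ : ℝ) (hlam : 0 < lam) (hμ : 0 < μ) (k : ℕ) :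
    IntegrableOn (fun x : ℝ => x ^ k * Real.exp (-μ * x) / (1 + lam * x)) (Ioi 0) := by
  refine Integrable.mono' (int_pow_exp μ hμ k) ?_ ?_
  · apply ContinuousOn.aestronglyMeasurable ?_ measurableSet_Ioi
    apply ContinuousOn.div (by fun_prop) (by fun_prop)
    intro x hx
    have : (0:ℝ) < x := hx
    positivity
  · filter_upwards [ae_restrict_mem measurableSet_Ioi] with x hx
    have hx0 : (0:ℝ) < x := hx
    have h1 : (1:ℝ) ≤ 1 + lam * x := by nlinarith
    rw [Real.norm_eq_abs, abs_div, abs_of_nonneg (show (0:ℝ) ≤ x ^ k * Real.exp (-μ*x) by positivity), abs_of_pos (show (0:ℝ) < 1 + lam * x by positivity)]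
    exact div_le_self (by positivity) h1

lemma log_le (lam x : ℝ) (hlam : 0 < lam) (hx : 0 ≤ x) :
    Real.log (1 + lam * x) ≤ lam * x := by
  have := Real.add_one_le_exp (lam * x)
  calc Real.log (1 + lam * x) ≤ Real.log (Real.exp (lam * x)) := by
        apply Real.log_le_log (by nlinarith) (by linarith)
    _ = lam * x := Real.log_exp _

lemma int_F (lam μ : ℝ) (hlam : 0 < lam) (hμ : 0 < μ) (k : ℕ) :
    IntegrableOn (fun x : ℝ => Real.log (1 + lam * x) * Real.exp (-μ * x) * x ^ k) (Ioi 0) := by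
  refine Integrable.mono' ((int_pow_exp μ hμ (k+1)).const_mul lam) ?_ ?_
  · apply ContinuousOn.aestronglyMeasurable ?_ measurableSet_Ioi
    apply ContinuousOn.mul (ContinuousOn.mul ?_ (by fun_prop)) (by fun_prop)
    apply ContinuousOn.log (by fun_prop)
    intro x hx
    have hx0 : (0:ℝ) < x := hx
    positivity
  · filter_upwards [ae_restrict_mem measurableSet_Ioi] with x hx
    have hx0 : (0:ℝ) < x := hx
    have h1 : (0:ℝ) ≤ Real.log (1 + lam * x) := Real.log_nonneg (by nlinarith)
    have h2 := log_le lam x hlam hx0.le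
    rw [Real.norm_eq_abs, abs_of_nonneg (by positivity)]
    calc Real.log (1 + lam * x) * Real.exp (-μ * x) * x ^ k
        ≤ (lam * x) * Real.exp (-μ * x) * x ^ k := by
          apply mul_le_mul_of_nonneg_right (mul_le_mul_of_nonneg_right h2 (by positivity))
          positivity
      _ = lam * (x ^ (k+1) * Real.exp (-μ * x)) := by ring

lemma F_rec (lam μ : ℝ) (hlam : 0 < lam) (hμ : 0 < μ) (k : ℕ) :
    F lam (k+1) μ = (lam/μ) * (∫ x in Ioi (0:ℝ), x^(k+1) * Real.exp (-μ*x) / (1+lam*x))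
      + (((k:ℝ)+1)/μ) * F lam k μ := by
  set G : ℝ → ℝ := fun x => -(1/μ) * (Real.log (1+lam*x) * Real.exp (-μ*x) * x^(k+1)) with hG
  have hderiv : ∀ x ∈ Ici (0:ℝ), HasDerivAt G
      (Real.log (1+lam*x) * Real.exp (-μ*x) * x^(k+1)
        - (lam/μ) * (x^(k+1) * Real.exp (-μ*x) / (1+lam*x))
        - (((k:ℝ)+1)/μ) * (Real.log (1+lam*x) * Real.exp (-μ*x) * x^k)) x := by
    intro x hx
    have hx0 : (0:ℝ) ≤ x := hx
    have hpos : 0 < 1 + lam * x := by nlinarith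
    have hne : 1 + lam * x ≠ 0 := ne_of_gt hpos
    have h0 : HasDerivAt (fun x : ℝ => 1 + lam * x) lam x := by
      simpa using ((hasDerivAt_id x).const_mul lam).const_add 1
    have h1 : HasDerivAt (fun x : ℝ => Real.log (1 + lam * x)) (lam / (1 + lam * x)) x :=
      h0.log hne
    have h2 : HasDerivAt (fun x : ℝ => Real.exp (-μ * x)) (-μ * Real.exp (-μ * x)) x := by
      simpa [mul_comm] using ((hasDerivAt_id x).const_mul (-μ)).exp
    have h3 : HasDerivAt (fun x : ℝ => x ^ (k+1)) (((k:ℝ)+1) * x ^ k) x := by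
      simpa using hasDerivAt_pow (k+1) x
    have : HasDerivAt (fun y => -(1/μ) * (Real.log (1+lam*y) * Real.exp (-μ*y) * y^(k+1))) _ x :=
      ((h1.mul h2).mul h3).const_mul (-(1/μ))
    convert this using 1
    simp only [Pi.mul_apply]
    field_simp
    ring
  have f'int : IntegrableOn (fun x : ℝ =>
      Real.log (1+lam*x) * Real.exp (-μ*x) * x^(k+1)
        - (lam/μ) * (x^(k+1) * Real.exp (-μ*x) / (1+lam*x))
        - (((k:ℝ)+1)/μ) * (Real.log (1+lam*x) * Real.exp (-μ*x) * x^k)) (Ioi 0) :=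
    ((int_F lam μ hlam hμ (k+1)).sub ((int_ratio lam μ hlam hμ (k+1)).const_mul (lam/μ))).sub
      ((int_F lam μ hlam hμ k).const_mul (((k:ℝ)+1)/μ))
  have htend : Tendsto G atTop (𝓝 0) := by
    have base : Tendsto (fun x : ℝ => x^(k+2) * Real.exp (-x)) atTop (𝓝 0) :=
      tendsto_pow_mul_exp_neg_atTop_nhds_zero _
    have comp : Tendsto (fun x : ℝ => (μ*x)^(k+2) * Real.exp (-(μ*x))) atTop (𝓝 0) :=
      base.comp (tendsto_id.const_mul_atTop hμ)
    have hbd : Tendsto (fun x : ℝ => (lam/μ) * (1/μ^(k+2)) * ((μ*x)^(k+2) * Real.exp (-(μ*x))))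
        atTop (𝓝 0) := by simpa using comp.const_mul ((lam/μ) * (1/μ^(k+2)))
    apply squeeze_zero_norm' ?_ hbd
    filter_upwards [eventually_ge_atTop (0:ℝ)] with x hx0
    have h1 : (0:ℝ) ≤ Real.log (1 + lam * x) := Real.log_nonneg (by nlinarith)
    have h2 := log_le lam x hlam hx0
    rw [Real.norm_eq_abs, hG, abs_mul, abs_of_nonneg (by positivity : (0:ℝ) ≤ Real.log (1+lam*x) * Real.exp (-μ*x) * x^(k+1))]
    have habs : |(-(1/μ))| = 1/μ := by rw [abs_neg, abs_of_pos (by positivity)]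
    rw [habs]
    have key : Real.log (1+lam*x) * Real.exp (-μ*x) * x^(k+1) ≤ (lam*x) * Real.exp (-μ*x) * x^(k+1) := by
      apply mul_le_mul_of_nonneg_right (mul_le_mul_of_nonneg_right h2 (by positivity))
      positivity
    calc (1/μ) * (Real.log (1+lam*x) * Real.exp (-μ*x) * x^(k+1))
        ≤ (1/μ) * ((lam*x) * Real.exp (-μ*x) * x^(k+1)) := by
          apply mul_le_mul_of_nonneg_left key (by positivity)
      _ = (lam/μ) * (1/μ^(k+2)) * ((μ*x)^(k+2) * Real.exp (-(μ*x))) := by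
          rw [mul_pow]; field_simp; ring
  have key := integral_Ioi_of_hasDerivAt_of_tendsto' hderiv f'int htend
  have hG0 : G 0 = 0 := by simp [hG]
  rw [hG0, sub_zero] at key
  have h1 : IntegrableOn (fun x : ℝ => Real.log (1+lam*x) * Real.exp (-μ*x) * x^(k+1)
      - (lam/μ) * (x^(k+1) * Real.exp (-μ*x) / (1+lam*x))) (Ioi 0) :=
    (int_F lam μ hlam hμ (k+1)).sub ((int_ratio lam μ hlam hμ (k+1)).const_mul (lam/μ))
  have h2 : IntegrableOn (fun x : ℝ =>
      (((k:ℝ)+1)/μ) * (Real.log (1+lam*x) * Real.exp (-μ*x) * x^k)) (Ioi 0) :=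
    (int_F lam μ hlam hμ k).const_mul (((k:ℝ)+1)/μ)
  have h3 : IntegrableOn (fun x : ℝ =>
      (lam/μ) * (x^(k+1) * Real.exp (-μ*x) / (1+lam*x))) (Ioi 0) :=
    (int_ratio lam μ hlam hμ (k+1)).const_mul (lam/μ)
  rw [integral_sub h1 h2, integral_sub (int_F lam μ hlam hμ (k+1)) h3,
    MeasureTheory.integral_const_mul, MeasureTheory.integral_const_mul] at key
  have hF1 : F lam (k+1) μ = ∫ x in Ioi (0:ℝ), Real.log (1+lam*x) * Real.exp (-μ*x) * x^(k+1) := rfl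
  have hF2 : F lam k μ = ∫ x in Ioi (0:ℝ), Real.log (1+lam*x) * Real.exp (-μ*x) * x^k := rfl
  rw [hF1, hF2]
  linarith [key]

/-- unrolling the recursion gives
F(λ,k,μ) = (k!/μ^k) F(λ,0,μ)
         + Σ_{j=1}^{k} (k!/j!) (λ/μ^{k−j+1}) ∫_0^∞ x^j e^{−μx}/(1+λx) dx. -/
theorem F_unrolled (lam μ : ℝ) (k : ℕ) (hlam : 0 < lam) (hμ : 0 < μ) :
    F lam k μ =
      ((k.factorial : ℝ) / μ ^ k) * F lam 0 μ +
        ∑ j ∈ Finset.Icc 1 k,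
          ((k.factorial : ℝ) / (j.factorial : ℝ)) * (lam / μ ^ (k - j + 1)) *
            ∫ x in Ioi (0:ℝ), x ^ j * Real.exp (-μ * x) / (1 + lam * x) := by
  induction k with
  | zero => simp
  | succ k ih =>
    rw [F_rec lam μ hlam hμ k, ih, Finset.sum_Icc_succ_top (by omega : 1 ≤ k+1)]
    have hfac : ((k+1).factorial : ℝ) = ((k:ℝ)+1) * (k.factorial : ℝ) := by
      rw [Nat.factorial_succ]; push_cast; ring
    have hterm : (((k+1).factorial : ℝ) / ((k+1).factorial : ℝ)) *
        (lam / μ ^ (k + 1 - (k+1) + 1)) *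
        ∫ x in Ioi (0:ℝ), x ^ (k+1) * Real.exp (-μ * x) / (1 + lam * x)
        = (lam/μ) * ∫ x in Ioi (0:ℝ), x ^ (k+1) * Real.exp (-μ * x) / (1 + lam * x) := by
      rw [Nat.sub_self, div_self (by exact_mod_cast (Nat.factorial_pos (k+1)).ne'),
        zero_add, pow_one, one_mul]
    have hsum : (((k:ℝ)+1)/μ) * ∑ j ∈ Finset.Icc 1 k,
        ((k.factorial : ℝ) / (j.factorial : ℝ)) * (lam / μ ^ (k - j + 1)) *
          ∫ x in Ioi (0:ℝ), x ^ j * Real.exp (-μ * x) / (1 + lam * x)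
        = ∑ j ∈ Finset.Icc 1 k,
          (((k+1).factorial : ℝ) / (j.factorial : ℝ)) * (lam / μ ^ (k + 1 - j + 1)) *
            ∫ x in Ioi (0:ℝ), x ^ j * Real.exp (-μ * x) / (1 + lam * x) := by
      rw [Finset.mul_sum]
      apply Finset.sum_congr rfl
      intro j hj
      have hjk : j ≤ k := (Finset.mem_Icc.mp hj).2
      have he : k + 1 - j + 1 = (k - j + 1) + 1 := by omega
      have hjf : (0:ℝ) < (j.factorial : ℝ) := by exact_mod_cast Nat.factorial_pos j
      rw [he, hfac, pow_succ]
      field_simp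
      ring
    rw [hterm, mul_add, hsum, hfac, pow_succ]
    field_simp
    ring
end
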